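/- arXiv:2009.11563 — 7 statements merged into one kernel-verified Lean document; each statement's English description precedes it below -/
import Mathlib

section
/- Let x = x_1,…,x_k be an M-regular sequence on an R-module M and let y ∈ R be such that M/xM is of bounded y-torsion. Then M/x^n M is of bounded y-torsion for all n ≥ 1. -/
/-!
A regular sequence `x` is quasi-regular: if a form `F` of degree `n` with coefficients in `M`
satisfies `F(x) ∈ Jⁿ⁺¹M`, where `J = (x)`, then all coefficients of `F` lie in `JM`. This goes by
induction on the length of `x`, splitting off its last element, which is regular modulo every
power of the ideal generated by the others. Hence `JⁿM/Jⁿ⁺¹M` is a direct sum of copies of `M/JM`,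
so its `y`-power torsion is killed by the same `y ^ c` as that of `M/JM`, and a bound for
`M/Jⁿ⁺¹M` follows from those for `M/JⁿM` and `JⁿM/Jⁿ⁺¹M`.
-/

/-- `x : Fin k → R` is an `M`-regular sequence: each `x i` is a non-zerodivisor on
`M/(x_1,…,x_{i-1})M`. -/
def IsRegularSeq {R : Type*} [CommRing R] (M : Type*) [AddCommGroup M] [Module R M]
    {k : ℕ} (x : Fin k → R) : Prop :=
  ∀ i : Fin k, ∀ z : M,
    x i • z ∈ (Ideal.span (x '' {j | j < i})) • (⊤ : Submodule R M) →
      z ∈ (Ideal.span (x '' {j | j < i})) • (⊤ : Submodule R M)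

section

open Set Submodule

variable {R M ι κ : Type*} [CommRing R] [AddCommGroup M] [Module R M] {n : ℕ}

def Sym.evalMonomial (x : ι → R) (s : Sym ι n) : R := ((s : Multiset ι).map x).prod

namespace Sym

@[simp]
lemma evalMonomial_cons (x : ι → R) (i : ι) (s : Sym ι n) :
    (i ::ₛ s).evalMonomial x = x i * s.evalMonomial x := by
  simp [evalMonomial, coe_cons]

lemma evalMonomial_map (x : κ → R) (f : ι → κ) (s : Sym ι n) :
    (s.map f).evalMonomial x = s.evalMonomial (x ∘ f) := by
  simp [evalMonomial, Multiset.map_map]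

lemma evalMonomial_eq_one (x : ι → R) (s : Sym ι 0) : s.evalMonomial x = 1 := by
  rw [eq_nil_of_card_zero s]
  rfl

lemma evalMonomial_mem_pow (x : ι → R) (s : Sym ι n) :
    s.evalMonomial x ∈ Ideal.span (range x) ^ n := by
  rcases s with ⟨t, rfl⟩
  change (t.map x).prod ∈ _
  induction t using Multiset.induction_on with
  | empty => simp
  | cons i t ih =>
    rw [Multiset.map_cons, Multiset.prod_cons, Multiset.card_cons, pow_succ']
    exact Ideal.mul_mem_mul (Ideal.subset_span ⟨i, rfl⟩) ih

end Sym

section QuasiRegular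

variable [Fintype ι] [DecidableEq ι]

/-- Evaluation at `x` of the degree-`n` form `∑ₛ m s • Xˢ`, whose monomials are indexed by
`s : Sym ι n`. -/
def evalForm (x : ι → R) (n : ℕ) : (Sym ι n → M) →ₗ[R] M where
  toFun m := ∑ s, s.evalMonomial x • m s
  map_add' m m' := by simp [smul_add, Finset.sum_add_distrib]
  map_smul' r m := by simp [Finset.smul_sum, smul_comm r]

lemma evalForm_apply (x : ι → R) (m : Sym ι n → M) :
    evalForm x n m = ∑ s, s.evalMonomial x • m s := rfl

lemma evalForm_single (x : ι → R) (s : Sym ι n) (v : M) :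
    evalForm x n (Pi.single s v) = s.evalMonomial x • v := by
  simp [evalForm_apply, Pi.single_apply]

lemma evalForm_degree_zero (x : ι → R) (m : Sym ι 0 → M) (s : Sym ι 0) :
    evalForm x 0 m = m s := by
  rw [evalForm_apply, Fintype.sum_unique, Subsingleton.elim default s, s.evalMonomial_eq_one,
    one_smul]

lemma pow_smul_le_map_evalForm (x : ι → R) (N : Submodule R M) (n : ℕ) :
    Ideal.span (range x) ^ n • N ≤ (pi univ fun _ => N).map (evalForm x n) := by
  have single_mem {n} (s : Sym ι n) {v} (hv : v ∈ N) :
      s.evalMonomial x • v ∈ (pi univ fun _ => N).map (evalForm x n) :=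
    ⟨Pi.single s v, fun t _ => by by_cases h : t = s <;> simp [h, hv], evalForm_single x s v⟩
  induction n with
  | zero =>
    intro v hv
    rw [pow_zero, Ideal.one_eq_top, top_smul] at hv
    simpa [Sym.evalMonomial_eq_one] using single_mem Sym.nil hv
  | succ n ih =>
    rw [pow_succ', mul_smul, span_smul_eq]
    refine set_smul_le _ _ _ fun _ z ⟨i, hi⟩ hz => ?_
    obtain ⟨m, hm, rfl⟩ := ih hz
    rw [← hi, evalForm_apply, Finset.smul_sum]
    refine sum_mem fun s _ => ?_
    rw [← mul_smul, ← Sym.evalMonomial_cons]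
    exact single_mem _ (hm s trivial)

lemma mem_pow_smul_iff_exists_evalForm (x : ι → R) {N : Submodule R M} {z : M} :
    z ∈ Ideal.span (range x) ^ n • N ↔
      ∃ m : Sym ι n → M, (∀ s, m s ∈ N) ∧ evalForm x n m = z := by
  refine ⟨fun hz => ?_, ?_⟩
  · obtain ⟨m, hm, rfl⟩ := pow_smul_le_map_evalForm x N n hz
    exact ⟨m, fun s => hm s trivial, rfl⟩
  · rintro ⟨m, hm, rfl⟩
    exact sum_mem fun s _ => smul_mem_smul (s.evalMonomial_mem_pow x) (hm s)

lemma evalForm_option (x : Option ι → R) (m : Sym (Option ι) (n + 1) → M) :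
    evalForm x (n + 1) m = x none • evalForm x n (fun s => m (none ::ₛ s)) +
      evalForm (x ∘ some) (n + 1) (fun t => m (t.map some)) := by
  rw [evalForm_apply, ← symOptionSuccEquiv.symm.sum_comp, Fintype.sum_sum_type]
  simp [symOptionSuccEquiv, evalForm_apply, Sym.evalMonomial_map, Finset.smul_sum, mul_smul]

lemma evalForm_comp_equiv [Fintype κ] [DecidableEq κ] (e : ι ≃ κ) (x : κ → R)
    (m : Sym κ n → M) : evalForm (x ∘ e) n (m ∘ Sym.map e) = evalForm x n m := by
  simp only [evalForm_apply, Function.comp_apply, ← Sym.evalMonomial_map]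
  exact (Sym.equivCongr e).sum_comp fun s => s.evalMonomial x • m s

variable (M) in
/-- The associated graded module of `M` for `J = (x)` is the polynomial module over `M ⧸ J M`
in the `x i`. -/
def IsQuasiRegularSeq (x : ι → R) : Prop :=
  ∀ n (m : Sym ι n → M),
    evalForm x n m ∈ Ideal.span (range x) ^ (n + 1) • (⊤ : Submodule R M) →
      ∀ s, m s ∈ Ideal.span (range x) • (⊤ : Submodule R M)

variable {x : ι → R}

lemma mem_smul_top_of_evalForm_mem_pow_succ
    (hzero : ∀ m : Sym ι n → M, evalForm x n m = 0 →
      ∀ s, m s ∈ Ideal.span (range x) • (⊤ : Submodule R M))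
    {m : Sym ι n → M}
    (hm : evalForm x n m ∈ Ideal.span (range x) ^ (n + 1) • (⊤ : Submodule R M)) (s : Sym ι n) :
    m s ∈ Ideal.span (range x) • (⊤ : Submodule R M) := by
  rw [pow_succ, mul_smul] at hm
  obtain ⟨u, hu, hmu⟩ := (mem_pow_smul_iff_exists_evalForm x).1 hm
  have := hzero (m - u) (by rw [map_sub, hmu, sub_self]) s
  simpa using add_mem this (hu s)

lemma isQuasiRegularSeq_of_evalForm_eq_zero
    (h : ∀ n (m : Sym ι n → M), evalForm x n m = 0 →
      ∀ s, m s ∈ Ideal.span (range x) • (⊤ : Submodule R M)) :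
    IsQuasiRegularSeq M x :=
  fun n _ hm => mem_smul_top_of_evalForm_mem_pow_succ (h n) hm

lemma isQuasiRegularSeq_of_isEmpty [IsEmpty ι] (x : ι → R) : IsQuasiRegularSeq M x := by
  refine isQuasiRegularSeq_of_evalForm_eq_zero fun n m hm s => ?_
  cases n with
  | zero => simp [← evalForm_degree_zero x m s, hm]
  | succ n => exact isEmptyElim s

namespace IsQuasiRegularSeq

lemma of_comp_equiv [Fintype κ] [DecidableEq κ] {x : κ → R} (e : ι ≃ κ)
    (h : IsQuasiRegularSeq M (x ∘ e)) : IsQuasiRegularSeq M x := by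
  intro n m hm s
  have hJ : range (x ∘ e) = range x := e.surjective.range_comp x
  rw [← evalForm_comp_equiv e, ← hJ] at hm
  simpa [hJ, Sym.map_map] using h n _ hm (s.map e.symm)

section

variable (hx : IsQuasiRegularSeq M x)
include hx

lemma smul_mem_pow_succ_smul {r r' : R}
    (h : ∀ z : M, r • z ∈ Ideal.span (range x) • (⊤ : Submodule R M) →
      r' • z ∈ Ideal.span (range x) • (⊤ : Submodule R M))
    {w : M} (hw : w ∈ Ideal.span (range x) ^ n • (⊤ : Submodule R M))
    (hrw : r • w ∈ Ideal.span (range x) ^ (n + 1) • (⊤ : Submodule R M)) :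
    r' • w ∈ Ideal.span (range x) ^ (n + 1) • (⊤ : Submodule R M) := by
  obtain ⟨u, -, rfl⟩ := (mem_pow_smul_iff_exists_evalForm x).1 hw
  rw [← map_smul] at hrw ⊢
  rw [pow_succ, mul_smul]
  exact (mem_pow_smul_iff_exists_evalForm x).2 ⟨_, fun s => h _ (hx n _ hrw s), rfl⟩

lemma mem_pow_smul_of_smul_mem {r : R}
    (hr : ∀ z : M, r • z ∈ Ideal.span (range x) • (⊤ : Submodule R M) →
      z ∈ Ideal.span (range x) • (⊤ : Submodule R M)) :
    ∀ (j : ℕ) (z : M), r • z ∈ Ideal.span (range x) ^ j • (⊤ : Submodule R M) →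
      z ∈ Ideal.span (range x) ^ j • (⊤ : Submodule R M)
  | 0, z, _ => by simp
  | j + 1, z, h => by
    have hz := mem_pow_smul_of_smul_mem hr j z
      (smul_mono_left (Ideal.pow_le_pow_right j.le_succ) h)
    simpa using hx.smul_mem_pow_succ_smul (r' := 1) (by simpa using hr) hz h

end

theorem of_comp_some {x : Option ι → R} (hx : IsQuasiRegularSeq M (x ∘ some))
    (hr : ∀ z : M, x none • z ∈ Ideal.span (range (x ∘ some)) • (⊤ : Submodule R M) →
      z ∈ Ideal.span (range (x ∘ some)) • (⊤ : Submodule R M)) :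
    IsQuasiRegularSeq M x := by
  have hJ : Ideal.span (range (x ∘ some)) ≤ Ideal.span (range x) :=
    Ideal.span_mono (range_comp_subset_range _ _)
  refine isQuasiRegularSeq_of_evalForm_eq_zero fun n => ?_
  induction n with
  | zero => intro m hm s; simp [← evalForm_degree_zero x m s, hm]
  | succ n ih =>
    intro m hm
    rw [evalForm_option] at hm
    set G := evalForm x n fun s => m (none ::ₛ s)
    set H := evalForm (x ∘ some) (n + 1) fun t => m (t.map some)
    have hG : G ∈ Ideal.span (range (x ∘ some)) ^ (n + 1) • (⊤ : Submodule R M) := by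
      refine hx.mem_pow_smul_of_smul_mem hr _ _ ?_
      rw [eq_neg_of_add_eq_zero_left hm]
      exact neg_mem ((mem_pow_smul_iff_exists_evalForm _).2 ⟨_, fun _ => trivial, rfl⟩)
    have h_none (s : Sym (Option ι) n) :
        m (none ::ₛ s) ∈ Ideal.span (range x) • (⊤ : Submodule R M) :=
      mem_smul_top_of_evalForm_mem_pow_succ ih (smul_mono_left (Ideal.pow_right_mono hJ _) hG) s
    have h_some (t : Sym ι (n + 1)) :
        m (t.map some) ∈ Ideal.span (range x) • (⊤ : Submodule R M) := by
      -- writing `G` as a form in `x ∘ some` makes `x none • G + H = 0` a relation among them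
      obtain ⟨w, -, hw⟩ := (mem_pow_smul_iff_exists_evalForm _).1 hG
      have hw' := hx (n + 1) (x none • w + fun t => m (t.map some))
        (by rw [map_add, map_smul, hw, hm]; exact zero_mem _) t
      simpa using sub_mem (smul_mono_left hJ hw')
        (smul_mem_smul (Ideal.subset_span ⟨none, rfl⟩) (mem_top : w t ∈ ⊤))
    intro s
    obtain ⟨s | t, rfl⟩ := symOptionSuccEquiv.symm.surjective s
    exacts [h_none s, h_some t]

end IsQuasiRegularSeq

end QuasiRegular

namespace IsRegularSeq

variable {k : ℕ} {x : Fin (k + 1) → R}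

lemma init (h : IsRegularSeq M x) : IsRegularSeq M (Fin.init x) := by
  intro i z
  have himage : Fin.init x '' {j | j < i} = x '' {j | j < i.castSucc} := by
    rw [show Fin.init x = x ∘ Fin.castSucc from rfl, image_comp]
    exact congrArg (x '' ·) (Fin.image_castSucc_Iio i)
  rw [himage]
  exact h i.castSucc z

lemma smul_last_mem (h : IsRegularSeq M x) (z : M)
    (hz : x (Fin.last k) • z ∈ Ideal.span (range (Fin.init x)) • (⊤ : Submodule R M)) :
    z ∈ Ideal.span (range (Fin.init x)) • (⊤ : Submodule R M) := by
  have himage : x '' {j | j < Fin.last k} = range (Fin.init x) := by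
    rw [show Fin.init x = x ∘ Fin.castSucc from rfl, range_comp, Fin.range_castSucc]
    rfl
  rw [← himage] at hz ⊢
  exact h (Fin.last k) z hz

end IsRegularSeq

theorem IsRegularSeq.isQuasiRegularSeq : ∀ {k : ℕ} {x : Fin k → R},
    IsRegularSeq M x → IsQuasiRegularSeq M x
  | 0, x, _ => isQuasiRegularSeq_of_isEmpty x
  | k + 1, x, h => by
    have hinit : x ∘ finSuccEquivLast.symm ∘ some = Fin.init x := by
      ext i
      simp [Fin.init]
    refine .of_comp_equiv finSuccEquivLast.symm (.of_comp_some ?_ ?_)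
    · rw [Function.comp_assoc, hinit]
      exact h.init.isQuasiRegularSeq
    · rw [Function.comp_assoc, hinit]
      simpa using h.smul_last_mem

namespace Submodule

/-- `y ^ c` kills the `y`-power torsion of `M ⧸ N`. -/
def PowTorsionKilledBy (N : Submodule R M) (y : R) (c : ℕ) : Prop :=
  ∀ (m : ℕ) (z : M), y ^ m • z ∈ N → y ^ c • z ∈ N

variable {N P : Submodule R M} {y : R}

lemma pow_smul_mem_of_le {a b : ℕ} (hab : a ≤ b) {z : M} (hz : y ^ a • z ∈ N) :
    y ^ b • z ∈ N := by
  rw [← Nat.sub_add_cancel hab, pow_add, mul_smul]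
  exact N.smul_mem _ hz

lemma exists_powTorsionKilledBy_iff :
    (∃ c, N.PowTorsionKilledBy y c) ↔ ∃ c : ℕ, ∀ m : ℕ, c ≤ m →
      N.comap (LinearMap.lsmul R M (y ^ m)) = N.comap (LinearMap.lsmul R M (y ^ c)) := by
  refine ⟨fun ⟨c, hc⟩ => ⟨c, fun m hm => le_antisymm (fun z hz => hc m z hz)
    (fun z hz => pow_smul_mem_of_le hm hz)⟩, fun ⟨c, hc⟩ => ⟨c, fun m z hz => ?_⟩⟩
  rcases le_total c m with hcm | hmc
  · exact (hc m hcm).le hz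
  · exact pow_smul_mem_of_le hmc hz

/-- Bounded torsion of `M ⧸ P` from bounded torsion of `M ⧸ N` and of `N ⧸ P`. -/
lemma PowTorsionKilledBy.of_le {a b : ℕ} (hPN : P ≤ N) (hN : N.PowTorsionKilledBy y a)
    (hP : ∀ m, ∀ w ∈ N, y ^ m • w ∈ P → y ^ b • w ∈ P) : P.PowTorsionKilledBy y (a + b) := by
  intro m z hz
  rw [add_comm, pow_add, mul_smul]
  refine hP m _ (hN m z (hPN hz)) ?_
  rw [← mul_smul, ← pow_add]
  exact pow_smul_mem_of_le (Nat.le_add_right m a) hz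

end Submodule

end

/-- If `x` is an `M`-regular sequence and `M/xM` is of bounded `y`-torsion, then
`M/x^n M` is of bounded `y`-torsion for all `n ≥ 1`.  Bounded `y`-torsion of the
quotient `M/N` is expressed via stabilization of the chain `(N :_M y^m)`. -/
theorem quotient_pow_boundedTorsion {R : Type*} [CommRing R]
    {M : Type*} [AddCommGroup M] [Module R M] {k : ℕ} (x : Fin k → R) (y : R)
    (hreg : IsRegularSeq M x)
    (hbdd : ∃ c : ℕ, ∀ m : ℕ, c ≤ m →
      ((Ideal.span (Set.range x)) • (⊤ : Submodule R M)).comap (LinearMap.lsmul R M (y ^ m)) =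
        ((Ideal.span (Set.range x)) • (⊤ : Submodule R M)).comap (LinearMap.lsmul R M (y ^ c))) :
    ∀ n : ℕ, 1 ≤ n → ∃ c : ℕ, ∀ m : ℕ, c ≤ m →
      ((Ideal.span (Set.range x)) ^ n • (⊤ : Submodule R M)).comap
          (LinearMap.lsmul R M (y ^ m)) =
        ((Ideal.span (Set.range x)) ^ n • (⊤ : Submodule R M)).comap
          (LinearMap.lsmul R M (y ^ c)) := by
  intro n hn
  rw [← Submodule.exists_powTorsionKilledBy_iff] at hbdd ⊢
  obtain ⟨c, hc⟩ := hbdd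
  induction n, hn using Nat.le_induction with
  | base => exact ⟨c, by rwa [pow_one]⟩
  | succ n _ ih =>
    obtain ⟨a, ha⟩ := ih
    exact ⟨a + c, ha.of_le (Submodule.smul_mono_left (Ideal.pow_le_pow_right n.le_succ))
      fun m _ hw => hreg.isQuasiRegularSeq.smul_mem_pow_succ_smul (hc m) hw⟩
end

section
/- Let x = x_1,…,x_k be an M-regular sequence and y ∈ R such that M/xM is of bounded y-torsion. Then the sequence x_1,…,x_k,y is M-proregular. -/
/-- A sequence `z : Fin l → R` is `M`-proregular (Lipman's definition). -/
def IsProregular {R : Type*} [CommRing R] (M : Type*) [AddCommGroup M] [Module R M]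
    {l : ℕ} (z : Fin l → R) : Prop :=
  ∀ i : Fin l, ∀ n : ℕ, ∃ m : ℕ, n ≤ m ∧
    ((Ideal.span ((fun j => z j ^ m) '' {j | j < i})) • (⊤ : Submodule R M)).comap
        (LinearMap.lsmul R M (z i ^ m)) ≤
      ((Ideal.span ((fun j => z j ^ n) '' {j | j < i})) • (⊤ : Submodule R M)).comap
        (LinearMap.lsmul R M (z i ^ (m - n)))

/-!
Proregularity at `x_i` holds with `m = n`, because powers of an `M`-regular sequence are again
`M`-regular; at `y` it holds with `m = n + B`, where `B` bounds the `y`-torsion of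
`M/(x_1^n,…,x_k^n)M`.

Both facts are proved by raising the entries of `x` to powers one at a time. If `r` is regular on
`M/Q`, multiplication by `r^e` embeds `M/(Q + rM)` into `M/(Q + r^(e+1)M)` with cokernel
`M/(Q + r^e M)`, so by induction on `e` any property closed under extensions passes from
`M/(Q + rM)` to all `M/(Q + r^e M)`; regularity of an element and bounded `y`-torsion are two such
properties. To apply this in the middle of the sequence one needs `r` to be regular modulo the
later entries, which follows from: if `r, s` is regular on `M/N`, then `r` is regular on
`M/(N + sM)`.
-/

section

open Submodule LinearMap

lemma Fin.image_cons_setOf_val_lt_succ {α : Type*} {k : ℕ} (a : α) (x : Fin k → α) (i : ℕ) :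
    (Fin.cons a x : Fin (k + 1) → α) '' {j | (j : ℕ) < i + 1} =
      insert a (x '' {j | (j : ℕ) < i}) := by
  ext b
  simp [Fin.exists_fin_succ, eq_comm]

lemma Fin.image_setOf_lt_castSucc {α : Type*} {k : ℕ} (g : Fin (k + 1) → α) (i : Fin k) :
    g '' {j | j < i.castSucc} = (fun j => g j.castSucc) '' {j | j < i} := by
  rw [← Function.comp_def, Set.image_comp]
  exact congrArg _ (Fin.image_castSucc_Iio i).symm

lemma Fin.image_setOf_lt_last {α : Type*} {k : ℕ} (g : Fin (k + 1) → α) :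
    g '' {j | j < Fin.last k} = Set.range fun j : Fin k => g j.castSucc := by
  rw [← Function.comp_def, Set.range_comp, Fin.range_castSucc]
  rfl

variable {R M : Type*} [CommRing R] [AddCommGroup M] [Module R M]

-- `Q.comap (lsmul R M a)` is the colon `Q :_M a`; `Q.comap (lsmul R M r) ≤ Q` says that `r` is
-- regular on `M ⧸ Q`.

lemma span_range_pow_le_span_range_pow {ι : Type*} (x : ι → R) {n m : ℕ} (h : n ≤ m) :
    Ideal.span (Set.range fun j => x j ^ m) ≤ Ideal.span (Set.range fun j => x j ^ n) :=
  Ideal.span_le.mpr <| by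
    rintro _ ⟨j, rfl⟩
    exact Ideal.mem_of_dvd _ (pow_dvd_pow _ h) (Ideal.subset_span ⟨j, rfl⟩)

lemma mem_sup_span_singleton_smul_top {Q : Submodule R M} {r : R} {m : M} :
    m ∈ Q ⊔ Ideal.span {r} • (⊤ : Submodule R M) ↔ ∃ q ∈ Q, ∃ w : M, q + r • w = m := by
  simp [mem_sup, ideal_span_singleton_smul, mem_smul_pointwise_iff_exists]

lemma comap_lsmul_one (P : Submodule R M) : P.comap (lsmul R M 1) = P := by
  ext
  simp

lemma comap_lsmul_pow_mono (P : Submodule R M) (y : R) {t t' : ℕ} (h : t ≤ t') :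
    P.comap (lsmul R M (y ^ t)) ≤ P.comap (lsmul R M (y ^ t')) := by
  intro u hu
  rw [mem_comap, lsmul_apply, ← Nat.sub_add_cancel h, pow_add, mul_smul]
  exact P.smul_mem _ hu

lemma comap_lsmul_pow_le {Q : Submodule R M} {r : R} (h : Q.comap (lsmul R M r) ≤ Q) (e : ℕ) :
    Q.comap (lsmul R M (r ^ e)) ≤ Q := by
  induction e with
  | zero =>
    intro z hz
    simpa using hz
  | succ e ih =>
    intro z hz
    refine ih (h ?_)
    simp only [mem_comap, lsmul_apply] at hz ⊢
    rwa [← mul_smul, ← pow_succ']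

lemma comap_lsmul_sup_span_le_of_sup_span {N : Submodule R M} {r s : R}
    (hr : N.comap (lsmul R M r) ≤ N)
    (hs : (N ⊔ Ideal.span {r} • ⊤).comap (lsmul R M s) ≤ N ⊔ Ideal.span {r} • ⊤) :
    (N ⊔ Ideal.span {s} • ⊤).comap (lsmul R M r) ≤ N ⊔ Ideal.span {s} • ⊤ := by
  intro z hz
  obtain ⟨q, hq, v, hqv⟩ := mem_sup_span_singleton_smul_top.mp hz
  rw [lsmul_apply] at hqv
  have hv : v ∈ N ⊔ Ideal.span {r} • ⊤ := by
    refine hs ?_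
    rw [mem_comap, lsmul_apply, ← add_sub_cancel_left q (s • v), hqv]
    exact sub_mem (mem_sup_right (smul_mem_smul (Ideal.mem_span_singleton_self r) mem_top))
      (mem_sup_left hq)
  obtain ⟨q', hq', a, hq'a⟩ := mem_sup_span_singleton_smul_top.mp hv
  have hza : z - s • a ∈ N := by
    refine hr ?_
    rw [mem_comap, lsmul_apply, smul_sub, ← hqv, ← hq'a, smul_comm r s, smul_add, ← add_assoc,
      add_sub_cancel_right]
    exact add_mem hq (N.smul_mem s hq')
  exact mem_sup_span_singleton_smul_top.mpr ⟨z - s • a, hza, a, sub_add_cancel _ _⟩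

section Extension

variable {Q : Submodule R M} {r : R}

lemma comap_lsmul_pow_sup_span_pow_succ_le (h : Q.comap (lsmul R M r) ≤ Q) (e : ℕ) :
    (Q ⊔ Ideal.span {r ^ (e + 1)} • ⊤).comap (lsmul R M (r ^ e)) ≤
      Q ⊔ Ideal.span {r} • ⊤ := by
  intro z hz
  obtain ⟨q, hq, w, hqw⟩ := mem_sup_span_singleton_smul_top.mp hz
  have hzw : r ^ e • (z - r • w) = q := by
    rw [smul_sub, smul_smul, ← pow_succ, ← lsmul_apply, ← hqw, add_sub_cancel_right]
  refine mem_sup_span_singleton_smul_top.mpr ⟨z - r • w, ?_, w, sub_add_cancel _ _⟩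
  exact comap_lsmul_pow_le h e (by rwa [mem_comap, lsmul_apply, hzw])

/-- Colon inclusions propagate along the extension
`0 → M/(Q + rM) → M/(Q + r^(e+1)M) → M/(Q + r^e M) → 0` whose first map is multiplication by
`r^e`. -/
lemma comap_lsmul_sup_span_pow_succ_le (h : Q.comap (lsmul R M r) ≤ Q) {e : ℕ} {a b c d : R}
    (habc : a = b * c)
    (hpow : (Q ⊔ Ideal.span {r ^ e} • ⊤).comap (lsmul R M a) ≤
      (Q ⊔ Ideal.span {r ^ e} • ⊤).comap (lsmul R M c))
    (hone : (Q ⊔ Ideal.span {r} • ⊤).comap (lsmul R M b) ≤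
      (Q ⊔ Ideal.span {r} • ⊤).comap (lsmul R M d)) :
    (Q ⊔ Ideal.span {r ^ (e + 1)} • ⊤).comap (lsmul R M a) ≤
      (Q ⊔ Ideal.span {r ^ (e + 1)} • ⊤).comap (lsmul R M (c * d)) := by
  intro u hu
  have hle : Q ⊔ Ideal.span {r ^ (e + 1)} • (⊤ : Submodule R M) ≤
      Q ⊔ Ideal.span {r ^ e} • ⊤ :=
    sup_le_sup_left (smul_mono_left (Ideal.span_singleton_le_span_singleton.mpr
      (pow_dvd_pow r e.le_succ))) Q
  obtain ⟨q, hq, v, hqv⟩ := mem_sup_span_singleton_smul_top.mp (hpow (hle hu))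
  rw [lsmul_apply] at hqv
  have hbv : b • v ∈ Q ⊔ Ideal.span {r} • ⊤ := by
    refine comap_lsmul_pow_sup_span_pow_succ_le h e ?_
    have : r ^ e • b • v = a • u - b • q := by
      rw [habc, mul_smul, ← hqv, smul_add, smul_comm b]
      abel
    rw [mem_comap, lsmul_apply, this]
    exact sub_mem hu (mem_sup_left (Q.smul_mem b hq))
  obtain ⟨q', hq', w, hq'w⟩ := mem_sup_span_singleton_smul_top.mp (hone hbv)
  rw [lsmul_apply] at hq'w
  refine mem_sup_span_singleton_smul_top.mpr
    ⟨d • q + r ^ e • q', add_mem (Q.smul_mem d hq) (Q.smul_mem _ hq'), w, ?_⟩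
  rw [lsmul_apply, mul_comm, mul_smul, ← hqv, smul_add, smul_comm d, ← hq'w, smul_add, smul_smul,
    ← pow_succ, add_assoc]

lemma comap_lsmul_sup_span_pow_le {s : R} (h : Q.comap (lsmul R M r) ≤ Q)
    (hs : (Q ⊔ Ideal.span {r} • ⊤).comap (lsmul R M s) ≤ Q ⊔ Ideal.span {r} • ⊤) (e : ℕ) :
    (Q ⊔ Ideal.span {r ^ e} • ⊤).comap (lsmul R M s) ≤ Q ⊔ Ideal.span {r ^ e} • ⊤ := by
  induction e with
  | zero => simp
  | succ e ih =>
    simpa [comap_lsmul_one] using comap_lsmul_sup_span_pow_succ_le h (mul_one s).symm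
      (by rwa [comap_lsmul_one]) (d := 1) (by rwa [comap_lsmul_one])

end Extension

def HasBoundedTorsionQuot (Q : Submodule R M) (y : R) : Prop :=
  ∃ c : ℕ, ∀ t : ℕ, Q.comap (lsmul R M (y ^ t)) ≤ Q.comap (lsmul R M (y ^ c))

lemma hasBoundedTorsionQuot_of_comap_eq {Q : Submodule R M} {y : R} {c : ℕ}
    (hc : ∀ m, c ≤ m → Q.comap (lsmul R M (y ^ m)) = Q.comap (lsmul R M (y ^ c))) :
    HasBoundedTorsionQuot Q y :=
  ⟨c, fun t => (le_total t c).elim (comap_lsmul_pow_mono Q y) fun h => (hc t h).le⟩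

lemma HasBoundedTorsionQuot.sup_span_pow {Q : Submodule R M} {r y : R}
    (h : Q.comap (lsmul R M r) ≤ Q) (hy : HasBoundedTorsionQuot (Q ⊔ Ideal.span {r} • ⊤) y)
    (e : ℕ) : HasBoundedTorsionQuot (Q ⊔ Ideal.span {r ^ e} • ⊤) y := by
  induction e with
  | zero => exact ⟨0, by simp⟩
  | succ e ih =>
    obtain ⟨A, hA⟩ := ih
    obtain ⟨B, hB⟩ := hy
    refine ⟨A + B, fun t => (comap_lsmul_pow_mono _ y (le_max_left t A)).trans ?_⟩
    rw [pow_add y A B]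
    exact comap_lsmul_sup_span_pow_succ_le h (pow_sub_mul_pow y (le_max_right t A)).symm
      (hA (max t A)) (hB (max t A - A))

def IsRegularSeqQuot (N : Submodule R M) {k : ℕ} (x : Fin k → R) : Prop :=
  ∀ i : Fin k, (N ⊔ Ideal.span (x '' {j | j < i}) • ⊤).comap (lsmul R M (x i)) ≤
    N ⊔ Ideal.span (x '' {j | j < i}) • ⊤

lemma isRegularSeq_iff_isRegularSeqQuot_bot {k : ℕ} {x : Fin k → R} :
    IsRegularSeq M x ↔ IsRegularSeqQuot (⊥ : Submodule R M) x := by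
  simp only [IsRegularSeq, IsRegularSeqQuot, bot_sup_eq, SetLike.le_def, mem_comap, lsmul_apply]

lemma isRegularSeqQuot_cons_iff {N : Submodule R M} {k : ℕ} {r : R} {x : Fin k → R} :
    IsRegularSeqQuot N (Fin.cons r x : Fin (k + 1) → R) ↔
      N.comap (lsmul R M r) ≤ N ∧ IsRegularSeqQuot (N ⊔ Ideal.span {r} • ⊤) x := by
  simp only [IsRegularSeqQuot, Fin.forall_fin_succ, Fin.cons_zero, Fin.cons_succ, Fin.lt_def,
    Fin.val_zero, Fin.val_succ, Fin.image_cons_setOf_val_lt_succ, Ideal.span_insert, sup_smul,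
    sup_assoc]
  simp

namespace IsRegularSeqQuot

variable {N : Submodule R M} {k : ℕ}

lemma comap_lsmul_head_le {r : R} {x : Fin k → R} (h : IsRegularSeqQuot N (Fin.cons r x))
    (i : ℕ) : (N ⊔ Ideal.span (x '' {j | (j : ℕ) < i}) • ⊤).comap (lsmul R M r) ≤
      N ⊔ Ideal.span (x '' {j | (j : ℕ) < i}) • ⊤ := by
  induction k generalizing N i with
  | zero => simpa [Set.eq_empty_of_isEmpty] using (isRegularSeqQuot_cons_iff.mp h).1
  | succ k ih =>
    induction x using Fin.consCases with | cons s x =>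
    obtain ⟨hr, hs, hx⟩ : N.comap (lsmul R M r) ≤ N ∧ _ ∧ _ := by
      simpa only [isRegularSeqQuot_cons_iff] using h
    cases i with
    | zero => simpa using hr
    | succ i =>
      rw [Fin.image_cons_setOf_val_lt_succ, Ideal.span_insert, sup_smul, ← sup_assoc]
      refine ih (isRegularSeqQuot_cons_iff.mpr ⟨comap_lsmul_sup_span_le_of_sup_span hr hs, ?_⟩) i
      rwa [sup_right_comm]

lemma sup_span_pow {r : R} {x : Fin k → R} (h : IsRegularSeqQuot N (Fin.cons r x)) (e : ℕ) :
    IsRegularSeqQuot (N ⊔ Ideal.span {r ^ e} • ⊤) x := by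
  intro i
  rw [sup_right_comm]
  refine comap_lsmul_sup_span_pow_le (h.comap_lsmul_head_le i) ?_ e
  rw [← sup_right_comm]
  exact (isRegularSeqQuot_cons_iff.mp h).2 i

lemma pow {x : Fin k → R} (h : IsRegularSeqQuot N x) (n : ℕ) :
    IsRegularSeqQuot N (fun j => x j ^ n) := by
  induction k generalizing N with
  | zero => exact fun i => i.elim0
  | succ k ih =>
    induction x using Fin.consCases with | cons r x =>
    rw [← Function.comp_def (· ^ n), Fin.comp_cons, isRegularSeqQuot_cons_iff]
    exact ⟨comap_lsmul_pow_le (isRegularSeqQuot_cons_iff.mp h).1 n, ih (h.sup_span_pow n)⟩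

lemma hasBoundedTorsionQuot_pow {x : Fin k → R} {y : R} (h : IsRegularSeqQuot N x)
    (hy : HasBoundedTorsionQuot (N ⊔ Ideal.span (Set.range x) • ⊤) y) (n : ℕ) :
    HasBoundedTorsionQuot (N ⊔ Ideal.span (Set.range fun j => x j ^ n) • ⊤) y := by
  induction k generalizing N with
  | zero => simpa using hy
  | succ k ih =>
    induction x using Fin.consCases with | cons r x =>
    obtain ⟨hr, hx⟩ := isRegularSeqQuot_cons_iff.mp h
    rw [Fin.range_cons, Ideal.span_insert, sup_smul, ← sup_assoc] at hy
    have hr' := (isRegularSeqQuot_cons_iff.mpr ⟨hr, hx.pow n⟩).comap_lsmul_head_le k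
    simp only [Fin.is_lt, Set.ofPred_true, Set.image_univ] at hr'
    have hrn := HasBoundedTorsionQuot.sup_span_pow hr' (by rw [sup_right_comm]; exact ih hx hy) n
    rwa [← Function.comp_def (· ^ n), Fin.comp_cons, Fin.range_cons, Ideal.span_insert, sup_smul,
      ← sup_assoc, sup_right_comm]

end IsRegularSeqQuot

end

/-- If `x` is an `M`-regular sequence and `M/xM` is of bounded `y`-torsion, then
the sequence `x_1,…,x_k,y` is `M`-proregular. -/
theorem isProregular_snoc {R : Type*} [CommRing R]
    {M : Type*} [AddCommGroup M] [Module R M] {k : ℕ} (x : Fin k → R) (y : R)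
    (hreg : IsRegularSeq M x)
    (hbdd : ∃ c : ℕ, ∀ m : ℕ, c ≤ m →
      ((Ideal.span (Set.range x)) • (⊤ : Submodule R M)).comap (LinearMap.lsmul R M (y ^ m)) =
        ((Ideal.span (Set.range x)) • (⊤ : Submodule R M)).comap (LinearMap.lsmul R M (y ^ c))) :
    IsProregular M (Fin.snoc x y) := by
  have hx := isRegularSeq_iff_isRegularSeqQuot_bot.mp hreg
  obtain ⟨c, hc⟩ := hbdd
  have hy : HasBoundedTorsionQuot (⊥ ⊔ Ideal.span (Set.range x) • ⊤ : Submodule R M) y := by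
    rw [bot_sup_eq]
    exact hasBoundedTorsionQuot_of_comap_eq hc
  intro i n
  induction i using Fin.lastCases with
  | cast i =>
    refine ⟨n, le_rfl, ?_⟩
    simpa [Fin.image_setOf_lt_castSucc, comap_lsmul_one] using hx.pow n i
  | last =>
    obtain ⟨B, hB⟩ := hx.hasBoundedTorsionQuot_pow hy n
    rw [bot_sup_eq] at hB
    refine ⟨n + B, by omega, ?_⟩
    simp only [Fin.snoc_last, Fin.image_setOf_lt_last, Fin.snoc_castSucc, Nat.add_sub_cancel_left]
    exact (Submodule.comap_mono (Submodule.smul_mono_left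
      (span_range_pow_le_span_range_pow x (by omega)))).trans
      (hB (n + B))
end

section
/- Let x ∈ R and M an R-module. If M is of bounded x-torsion, then M ⊗_R F is of bounded x-torsion for every flat R-module F. -/
/-- `M` is of bounded `x`-torsion. -/
def BoundedTorsion (R : Type*) [CommRing R] (M : Type*) [AddCommGroup M] [Module R M]
    (x : R) : Prop :=
  ∃ c : ℕ, ∀ n : ℕ, c ≤ n →
    Submodule.torsionBy R M (x ^ n) = Submodule.torsionBy R M (x ^ c)

open TensorProduct in
/-- If `M` is of bounded `x`-torsion, then `M ⊗_R F` is of bounded `x`-torsion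
for every flat `R`-module `F`. -/
theorem boundedTorsion_tensor_flat (R : Type*) [CommRing R]
    (M : Type*) [AddCommGroup M] [Module R M] (x : R)
    (h : BoundedTorsion R M x)
    (F : Type*) [AddCommGroup F] [Module R F] [Module.Flat R F] :
    BoundedTorsion R (M ⊗[R] F) x := by
  obtain ⟨c, hc⟩ := h
  refine ⟨c, fun n hn => ?_⟩
  have key : ∀ r : R, Submodule.torsionBy R (M ⊗[R] F) r =
      LinearMap.range (LinearMap.rTensor F (Submodule.torsionBy R M r).subtype) := by
    intro r
    have hmap : LinearMap.rTensor F (LinearMap.lsmul R M r) =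
        LinearMap.lsmul R (M ⊗[R] F) r := by
      ext m f
      simp [TensorProduct.smul_tmul']
    have hex : Function.Exact (Submodule.torsionBy R M r).subtype (LinearMap.lsmul R M r) := by
      rw [LinearMap.exact_iff]
      ext m
      simp [Submodule.mem_torsionBy_iff, eq_comm]
    have h2 := Module.Flat.rTensor_exact F hex
    rw [LinearMap.exact_iff] at h2
    ext z
    rw [Submodule.mem_torsionBy_iff, ← h2, LinearMap.mem_ker, hmap]
    rfl
  rw [key, key, hc n hn]
end

section
/- Let f_1,…,f_r be a covering sequence of R (generating the unit ideal) and x ∈ R, M an R-module. Then M is of bounded x-torsion if and only if M_{f_i} is of bounded (x/1)-torsion over R_{f_i} for all i = 1,…,r. -/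
open Submodule

namespace LocalizedModule

variable {R : Type*} [CommRing R] (S : Submonoid R) {M : Type*} [AddCommGroup M] [Module R M]

lemma mk_mem_torsionBy_algebraMap_iff (a : R) (m : M) (s : S) :
    mk m s ∈ torsionBy (Localization S) (LocalizedModule S M) (algebraMap R _ a) ↔
      ∃ u : S, (u : R) • m ∈ torsionBy R M a := by
  simp only [mem_torsionBy_iff]
  rw [← Localization.mk_one_eq_algebraMap, mk_smul_mk, one_mul, ← zero_mk (1 : S), mk_eq]
  constructor <;> (rintro ⟨u, hu⟩; exact ⟨u, by simpa [smul_comm a, Submonoid.smul_def] using hu⟩)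

lemma torsionBy_algebraMap_mono {a b : R} (h : torsionBy R M a ≤ torsionBy R M b) :
    torsionBy (Localization S) (LocalizedModule S M) (algebraMap R _ a) ≤
      torsionBy (Localization S) (LocalizedModule S M) (algebraMap R _ b) := by
  intro z hz
  induction z using induction_on with
  | h m s =>
    obtain ⟨u, hu⟩ := (mk_mem_torsionBy_algebraMap_iff S a m s).mp hz
    exact (mk_mem_torsionBy_algebraMap_iff S b m s).mpr ⟨u, h hu⟩

lemma exists_smul_mem_torsionBy_of_le {a b : R}
    (h : torsionBy (Localization S) (LocalizedModule S M) (algebraMap R _ a) ≤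
      torsionBy (Localization S) (LocalizedModule S M) (algebraMap R _ b))
    {m : M} (hm : m ∈ torsionBy R M a) : ∃ u : S, (u : R) • m ∈ torsionBy R M b :=
  (mk_mem_torsionBy_algebraMap_iff S b m 1).mp <|
    h <| (mk_mem_torsionBy_algebraMap_iff S a m 1).mpr ⟨1, by simpa using hm⟩

end LocalizedModule

section BoundedTorsion

variable {R : Type*} [CommRing R] {M : Type*} [AddCommGroup M] [Module R M] {x : R}

lemma torsionBy_pow_mono {m n : ℕ} (h : m ≤ n) :
    torsionBy R M (x ^ m) ≤ torsionBy R M (x ^ n) :=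
  torsionBy_le_torsionBy_of_dvd _ _ (pow_dvd_pow x h)

lemma boundedTorsion_iff_exists_le :
    BoundedTorsion R M x ↔ ∃ c : ℕ, ∀ n : ℕ, torsionBy R M (x ^ n) ≤ torsionBy R M (x ^ c) := by
  refine ⟨fun ⟨c, hc⟩ => ⟨c, fun n => ?_⟩, fun ⟨c, hc⟩ => ⟨c, fun n hn => ?_⟩⟩
  · rcases le_total c n with hcn | hnc
    · exact (hc n hcn).le
    · exact torsionBy_pow_mono hnc
  · exact (hc n).antisymm (torsionBy_pow_mono hn)

lemma BoundedTorsion.localizedModule (S : Submonoid R) (h : BoundedTorsion R M x) :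
    BoundedTorsion (Localization S) (LocalizedModule S M) (algebraMap R _ x) := by
  obtain ⟨c, hc⟩ := boundedTorsion_iff_exists_le.mp h
  refine boundedTorsion_iff_exists_le.mpr ⟨c, fun n => ?_⟩
  simpa only [map_pow] using LocalizedModule.torsionBy_algebraMap_mono S (hc n)

lemma boundedTorsion_of_localizedModule {ι : Type*} [Fintype ι] (f : ι → R)
    (hf : Ideal.span (Set.range f) = ⊤)
    (h : ∀ i, BoundedTorsion (Localization.Away (f i))
      (LocalizedModule (Submonoid.powers (f i)) M) (algebraMap R _ x)) :
    BoundedTorsion R M x := by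
  choose c hc using fun i => boundedTorsion_iff_exists_le.mp (h i)
  refine boundedTorsion_iff_exists_le.mpr ⟨Finset.univ.sup c, fun n m hm => ?_⟩
  refine mem_of_span_eq_top_of_smul_pow_mem _ _ hf m ?_
  rintro ⟨_, i, rfl⟩
  obtain ⟨⟨_, k, rfl⟩, hk⟩ := LocalizedModule.exists_smul_mem_torsionBy_of_le
    (Submonoid.powers (f i)) (b := x ^ c i) (by simpa only [map_pow] using hc i n) hm
  exact ⟨k, torsionBy_pow_mono (Finset.le_sup (Finset.mem_univ i)) hk⟩

end BoundedTorsion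

/-- For a covering sequence `f_1,…,f_r` (generating the unit ideal), `M` is of bounded
`x`-torsion iff each localization `M_{f_i}` is of bounded `x/1`-torsion over `R_{f_i}`. -/
theorem boundedTorsion_iff_localized_on_cover {R : Type*} [CommRing R] {r : ℕ}
    (f : Fin r → R) (hcov : Ideal.span (Set.range f) = ⊤)
    (M : Type*) [AddCommGroup M] [Module R M] (x : R) :
    BoundedTorsion R M x ↔
      ∀ i : Fin r,
        BoundedTorsion (Localization.Away (f i))
          (LocalizedModule (Submonoid.powers (f i)) M)
          (algebraMap R (Localization.Away (f i)) x) :=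
  ⟨fun h _ => h.localizedModule _, boundedTorsion_of_localizedModule f hcov⟩
end

section
/- Let x = x_1,…,x_k be an M-regular sequence. Then for every i and every n ≥ 1, the element x_i is a non-zerodivisor on M/(x_1,…,x_{i-1})^n M. -/
open Finsupp

namespace RegSeqAux

variable {R : Type*} [CommRing R] {M : Type*} [AddCommGroup M] [Module R M]

variable (y : ℕ → R)

/-- The value in `R` of the monomial `μ` at the variables `y`. -/
def coeffR (μ : ℕ →₀ ℕ) : R := μ.prod fun j e => y j ^ e

/-- The ideal generated by the first `r` elements. -/
def Jd (r : ℕ) : Ideal R := Ideal.span (y '' Set.Iio r)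

/-- The value in `M` of a polynomial with coefficients in `M`. -/
def val (F : (ℕ →₀ ℕ) →₀ M) : M := F.sum fun μ m => coeffR y μ • m

/-- `F` is (supported on monomials) homogeneous of degree `n` in the first `r` variables. -/
def Hom (r n : ℕ) (F : (ℕ →₀ ℕ) →₀ M) : Prop :=
  ∀ μ ∈ F.support, (∀ j ∈ μ.support, j < r) ∧ (μ.sum fun _ e => e) = n

variable (M) in
/-- The first `r` elements of `y` form a regular sequence on `M`. -/
def Reg (r : ℕ) : Prop :=
  ∀ j < r, ∀ z : M, y j • z ∈ Jd y j • (⊤ : Submodule R M) → z ∈ Jd y j • (⊤ : Submodule R M)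

variable (M) in
/-- Quasi-regularity statement in degree `n` for the first `r` variables. -/
def QRstat (r n : ℕ) : Prop :=
  ∀ F : (ℕ →₀ ℕ) →₀ M, Hom r n F → val y F ∈ (Jd y r) ^ (n + 1) • (⊤ : Submodule R M) →
    ∀ μ, F μ ∈ Jd y r • (⊤ : Submodule R M)

lemma val_add (F G : (ℕ →₀ ℕ) →₀ M) : val y (F + G) = val y F + val y G :=
  Finsupp.sum_add_index' (fun _ => smul_zero _) (fun _ _ _ => smul_add _ _ _)

lemma val_smul (c : R) (F : (ℕ →₀ ℕ) →₀ M) : val y (c • F) = c • val y F := by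
  rw [val, Finsupp.sum_smul_index' (fun _ => smul_zero _)]
  rw [val, Finsupp.smul_sum]
  exact Finsupp.sum_congr fun μ _ => smul_comm _ _ _

lemma val_single (μ : ℕ →₀ ℕ) (m : M) : val y (Finsupp.single μ m) = coeffR y μ • m :=
  Finsupp.sum_single_index (smul_zero _)

lemma coeffR_add (μ ν : ℕ →₀ ℕ) : coeffR y (μ + ν) = coeffR y μ * coeffR y ν :=
  Finsupp.prod_add_index' (fun _ => pow_zero _) (fun _ _ _ => pow_add _ _ _)

lemma coeffR_single (l e : ℕ) : coeffR y (Finsupp.single l e) = y l ^ e :=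
  Finsupp.prod_single_index (pow_zero _)

lemma shift_inj (l : ℕ) : Function.Injective (fun μ : ℕ →₀ ℕ => μ + Finsupp.single l 1) :=
  add_left_injective _

lemma val_mapDomain_shift (l : ℕ) (H : (ℕ →₀ ℕ) →₀ M) :
    val y (Finsupp.mapDomain (fun μ => μ + Finsupp.single l 1) H) = y l • val y H := by
  rw [val, Finsupp.sum_mapDomain_index_inj (shift_inj l), val, Finsupp.smul_sum]
  refine Finsupp.sum_congr fun μ _ => ?_
  rw [coeffR_add, coeffR_single, pow_one, mul_comm, mul_smul]

lemma prod_pow_mem {r : ℕ} (μ : ℕ →₀ ℕ) (T : Finset ℕ) (h : ∀ j ∈ T, j < r) :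
    (∏ j ∈ T, y j ^ μ j) ∈ (Jd y r) ^ (∑ j ∈ T, μ j) := by
  classical
  induction T using Finset.induction with
  | empty => simp [Ideal.one_eq_top]
  | @insert a T hnotin ih =>
      rw [Finset.prod_insert hnotin, Finset.sum_insert hnotin, pow_add]
      exact Ideal.mul_mem_mul
        (Ideal.pow_mem_pow (Ideal.subset_span
          (Set.mem_image_of_mem y (show a ∈ Set.Iio r from h a (Finset.mem_insert_self a T)))) _)
        (ih fun j hj => h j (Finset.mem_insert_of_mem hj))

lemma coeffR_mem {r : ℕ} {μ : ℕ →₀ ℕ} (h : ∀ j ∈ μ.support, j < r) :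
    coeffR y μ ∈ (Jd y r) ^ (μ.sum fun _ e => e) := by
  rw [coeffR, Finsupp.prod, Finsupp.sum]
  exact prod_pow_mem y μ μ.support h

lemma val_mem {r n : ℕ} {F : (ℕ →₀ ℕ) →₀ M} (hF : Hom r n F) :
    val y F ∈ (Jd y r) ^ n • (⊤ : Submodule R M) := by
  refine Submodule.sum_mem _ fun μ hμ => ?_
  obtain ⟨h1, h2⟩ := hF μ hμ
  exact Submodule.smul_mem_smul (h2 ▸ coeffR_mem y h1) Submodule.mem_top

lemma val_mem' {r n : ℕ} {F : (ℕ →₀ ℕ) →₀ M} (hF : Hom r n F)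
    (hc : ∀ μ, F μ ∈ (Jd y r) • (⊤ : Submodule R M)) :
    val y F ∈ (Jd y r) ^ (n + 1) • (⊤ : Submodule R M) := by
  refine Submodule.sum_mem _ fun μ hμ => ?_
  obtain ⟨h1, h2⟩ := hF μ hμ
  rw [pow_succ, ← smul_eq_mul, Submodule.smul_assoc]
  exact Submodule.smul_mem_smul (h2 ▸ coeffR_mem y h1) (hc μ)

lemma Hom.add {r n : ℕ} {F G : (ℕ →₀ ℕ) →₀ M} (hF : Hom r n F) (hG : Hom r n G) :
    Hom r n (F + G) := by
  intro μ hμ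
  rcases Finset.mem_union.1 (Finsupp.support_add hμ) with h | h
  · exact hF μ h
  · exact hG μ h

lemma Hom.smul {r n : ℕ} (c : R) {F : (ℕ →₀ ℕ) →₀ M} (hF : Hom r n F) :
    Hom r n (c • F) := fun μ hμ => hF μ (Finsupp.support_smul hμ)

lemma Hom.neg {r n : ℕ} {F : (ℕ →₀ ℕ) →₀ M} (hF : Hom r n F) : Hom r n (-F) := by
  intro μ hμ; exact hF μ (by simpa using hμ)

lemma Hom.sub {r n : ℕ} {F G : (ℕ →₀ ℕ) →₀ M} (hF : Hom r n F) (hG : Hom r n G) :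
    Hom r n (F - G) := by
  rw [sub_eq_add_neg]; exact hF.add hG.neg

lemma mem_span_singleton_smul {a : R} {N : Submodule R M} {w : M}
    (hw : w ∈ Ideal.span {a} • N) : ∃ m ∈ N, w = a • m := by
  refine Submodule.smul_induction_on hw ?_ ?_
  · intro c hc m hm
    obtain ⟨u, rfl⟩ := Ideal.mem_span_singleton'.1 hc
    exact ⟨u • m, Submodule.smul_mem _ _ hm, by rw [mul_smul, smul_comm]⟩
  · rintro w1 w2 ⟨m1, hm1, rfl⟩ ⟨m2, hm2, rfl⟩
    exact ⟨m1 + m2, Submodule.add_mem _ hm1 hm2, (smul_add _ _ _).symm⟩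

lemma pow_sup_le (A B : Ideal R) (n : ℕ) :
    (A ⊔ B) ^ (n + 1) ≤ A ^ (n + 1) ⊔ B * (A ⊔ B) ^ n := by
  induction n with
  | zero => simpa using sup_le (le_sup_left) (le_sup_right)
  | succ n ih =>
    calc (A ⊔ B) ^ (n + 2) = (A ⊔ B) ^ (n + 1) * (A ⊔ B) := pow_succ _ _
      _ ≤ (A ^ (n + 1) ⊔ B * (A ⊔ B) ^ n) * (A ⊔ B) := Ideal.mul_mono_left ih
      _ ≤ A ^ (n + 2) ⊔ B * (A ⊔ B) ^ (n + 1) := by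
          rw [Ideal.sup_mul, Ideal.mul_sup]
          have h1 : A ^ (n+1) * A ≤ A ^ (n+2) ⊔ B * (A ⊔ B) ^ (n + 1) := by
            rw [← pow_succ]; exact le_sup_left
          have h2 : A ^ (n+1) * B ≤ A ^ (n+2) ⊔ B * (A ⊔ B) ^ (n + 1) := by
            refine le_trans ?_ le_sup_right
            rw [mul_comm]
            exact Ideal.mul_mono_right (Ideal.pow_right_mono le_sup_left (n+1))
          have h3 : (B * (A ⊔ B) ^ n) * (A ⊔ B) ≤ A ^ (n+2) ⊔ B * (A ⊔ B) ^ (n + 1) := by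
            rw [mul_assoc, ← pow_succ]; exact le_sup_right
          exact sup_le (sup_le h1 h2) h3

lemma Jd_succ (r : ℕ) : Jd y (r + 1) = Jd y r ⊔ Ideal.span {y r} := by
  have : Set.Iio (r + 1) = insert r (Set.Iio r) := by
    ext j; simp [Nat.lt_succ_iff, Nat.lt_iff_le_pred, le_iff_lt_or_eq, or_comm]
  rw [Jd, this, Set.image_insert_eq, Ideal.span_insert, Jd, sup_comm]

lemma Jd_le_succ (r : ℕ) : Jd y r ≤ Jd y (r + 1) := by
  rw [Jd_succ]; exact le_sup_left

lemma mem_Jd {r l : ℕ} (hl : l < r) : y l ∈ Jd y r :=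
  Ideal.subset_span (Set.mem_image_of_mem y hl)

lemma hom_zero_rep (r : ℕ) (w : M) : Hom r 0 (Finsupp.single 0 w : (ℕ →₀ ℕ) →₀ M)
    ∧ val y (Finsupp.single 0 w) = w := by
  constructor
  · intro μ hμ
    have := Finsupp.support_single_subset hμ
    simp only [Finset.mem_singleton] at this
    subst this
    simp
  · rw [val_single]
    simp [coeffR]

/-- Multiplication by an element of `Jd r` raises a representation by one degree. -/
lemma rep_mul {r n : ℕ} {c : R} (hc : c ∈ Jd y r) (F : (ℕ →₀ ℕ) →₀ M) (hF : Hom r n F) :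
    ∃ G, Hom r (n + 1) G ∧ val y G = c • val y F := by
  induction hc using Submodule.span_induction with
  | mem a ha =>
      obtain ⟨l, hl, rfl⟩ := ha
      refine ⟨Finsupp.mapDomain (fun μ => μ + Finsupp.single l 1) F, ?_, val_mapDomain_shift y l F⟩
      intro μ hμ
      have : μ ∈ Finset.image (fun ν => ν + Finsupp.single l 1) F.support :=
        Finset.mem_of_subset Finsupp.mapDomain_support hμ
      obtain ⟨ν, hν, rfl⟩ := Finset.mem_image.1 this
      obtain ⟨h1, h2⟩ := hF ν hν
      constructor
      · intro j hj
        rcases Finset.mem_union.1 (Finsupp.support_add hj) with h | h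
        · exact h1 j h
        · have := Finsupp.support_single_subset h
          simp only [Finset.mem_singleton] at this
          subst this; exact hl
      · rw [Finsupp.sum_add_index' (fun _ => rfl) (fun _ _ _ => rfl), h2,
          Finsupp.sum_single_index rfl]
  | zero =>
      exact ⟨0, fun μ hμ => by simp at hμ, by simp [val, zero_smul]⟩
  | add a b _ _ iha ihb =>
      obtain ⟨G1, hG1, hv1⟩ := iha
      obtain ⟨G2, hG2, hv2⟩ := ihb
      exact ⟨G1 + G2, hG1.add hG2, by rw [val_add, hv1, hv2, add_smul]⟩
  | smul a b _ ihb =>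
      obtain ⟨G, hG, hv⟩ := ihb
      exact ⟨a • G, Hom.smul a hG, by rw [val_smul, hv, smul_eq_mul, mul_smul]⟩

/-- Representation lemma : every element of `(Jd r)^n • ⊤` is the value of a homogeneous
degree-`n` form. -/
lemma rep {r : ℕ} : ∀ n : ℕ, ∀ w ∈ (Jd y r) ^ n • (⊤ : Submodule R M),
    ∃ F : (ℕ →₀ ℕ) →₀ M, Hom r n F ∧ val y F = w := by
  intro n
  induction n with
  | zero =>
      intro w _
      exact ⟨Finsupp.single 0 w, (hom_zero_rep y r w).1, (hom_zero_rep y r w).2⟩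
  | succ n ih =>
      intro w hw
      rw [pow_succ, mul_comm, ← smul_eq_mul, Submodule.smul_assoc] at hw
      refine Submodule.smul_induction_on hw ?_ ?_
      · intro c hc m hm
        obtain ⟨F, hF, hv⟩ := ih m hm
        obtain ⟨G, hG, hv'⟩ := rep_mul y hc F hF
        exact ⟨G, hG, by rw [hv', hv]⟩
      · rintro w1 w2 ⟨F1, hF1, rfl⟩ ⟨F2, hF2, rfl⟩
        exact ⟨F1 + F2, hF1.add hF2, val_add y F1 F2⟩

/-- From quasi-regularity of the first `r` elements and regularity of `t` modulo `Jd r`,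
deduce that `t` is a non-zerodivisor modulo all powers of `Jd r`. -/
lemma main_aux {r : ℕ} {t : R} (hQR : ∀ n, QRstat M y r n)
    (hreg : ∀ z : M, t • z ∈ Jd y r • (⊤ : Submodule R M) → z ∈ Jd y r • (⊤ : Submodule R M)) :
    ∀ n, 1 ≤ n → ∀ z : M, t • z ∈ (Jd y r) ^ n • (⊤ : Submodule R M) →
      z ∈ (Jd y r) ^ n • (⊤ : Submodule R M) := by
  intro n
  induction n with
  | zero => omega
  | succ n ih =>
      intro _ z hz
      rcases Nat.eq_zero_or_pos n with rfl | hn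
      · rw [pow_one] at hz ⊢
        exact hreg z hz
      · have hz' : t • z ∈ (Jd y r) ^ n • (⊤ : Submodule R M) :=
          Submodule.smul_mono_left (Ideal.pow_le_pow_right (Nat.le_succ n)) hz
        obtain ⟨F, hF, hvF⟩ := rep y n z (ih hn z hz')
        have hv : val y (t • F) = t • z := by rw [val_smul, hvF]
        have hcoe : ∀ μ, t • F μ ∈ Jd y r • (⊤ : Submodule R M) := by
          intro μ
          have := hQR n (t • F) (Hom.smul t hF) (by rw [hv]; exact hz)
          simpa using this μ
        rw [← hvF]
        exact val_mem' y hF fun μ => hreg _ (hcoe μ)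

/-- Degree-zero quasi-regularity: trivial. -/
lemma qr_deg_zero (r : ℕ) : QRstat M y r 0 := by
  intro F hF hval μ
  classical
  have hsupp : F.support ⊆ {0} := by
    intro ν hν
    have h2 := (hF ν hν).2
    have : ν = 0 := by
      ext j
      by_contra hj
      have hjs : j ∈ ν.support := Finsupp.mem_support_iff.2 hj
      have : 0 < ν.sum fun _ e => e := by
        rw [Finsupp.sum]
        exact Finset.sum_pos' (fun _ _ => Nat.zero_le _) ⟨j, hjs, Nat.pos_of_ne_zero hj⟩
      omega
    simp [this]
  have hFs : F = Finsupp.single 0 (F 0) := by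
    ext ν
    by_cases hν : ν = 0
    · simp [hν]
    · rw [Finsupp.single_apply, if_neg (fun h => hν h.symm)]
      by_contra hne
      have := hsupp (Finsupp.mem_support_iff.2 hne)
      simp only [Finset.mem_singleton] at this
      exact hν this
  have hv0 : val y F = F 0 := by
    rw [hFs, val_single]
    simp [coeffR]
  by_cases hμ : μ = 0
  · subst hμ
    rw [← hv0]
    rw [pow_one] at hval
    exact hval
  · rw [hFs, Finsupp.single_apply, if_neg (fun h => hμ h.symm)]
    exact Submodule.zero_mem _

lemma val_zero : val y (0 : (ℕ →₀ ℕ) →₀ M) = 0 := by simp [val]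

lemma val_neg (F : (ℕ →₀ ℕ) →₀ M) : val y (-F) = - val y F := by
  have h : val y F + val y (-F) = 0 := by
    rw [← val_add, add_neg_cancel, val_zero]
  exact eq_neg_of_add_eq_zero_right h

lemma val_sub (F G : (ℕ →₀ ℕ) →₀ M) : val y (F - G) = val y F - val y G := by
  rw [sub_eq_add_neg, val_add, val_neg, sub_eq_add_neg]

/-- Quasi-regularity: a regular sequence is quasi-regular. -/
theorem qr : ∀ r : ℕ, Reg M y r → ∀ n : ℕ, QRstat M y r n := by
  intro r
  induction r with
  | zero =>
      intro _ n
      rcases n with _ | n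
      · exact qr_deg_zero y 0
      · intro F hF _ μ
        have hμ0 : F μ = 0 := by
          by_contra h
          obtain ⟨h1, h2⟩ := hF μ (Finsupp.mem_support_iff.2 h)
          have hμe : μ = 0 := by
            rw [← Finsupp.support_eq_empty]
            exact Finset.eq_empty_of_forall_notMem fun j hj => Nat.not_lt_zero j (h1 j hj)
          rw [hμe, Finsupp.sum_zero_index] at h2
          omega
        rw [hμ0]
        exact Submodule.zero_mem _
  | succ r ihr =>
      intro hr1 n
      have hrr : Reg M y r := fun j hj => hr1 j (Nat.lt_succ_of_lt hj)
      have hQRr : ∀ n, QRstat M y r n := ihr hrr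
      have hregr : ∀ z : M, y r • z ∈ Jd y r • (⊤ : Submodule R M) →
          z ∈ Jd y r • (⊤ : Submodule R M) := hr1 r (Nat.lt_succ_self r)
      induction n with
      | zero => exact qr_deg_zero y (r + 1)
      | succ m ihm =>
          intro F hF hval μ0
          classical
          set σ : (ℕ →₀ ℕ) → (ℕ →₀ ℕ) := fun μ => μ + Finsupp.single r 1 with hσ
          have hσinj : Function.Injective σ := shift_inj r
          set H : (ℕ →₀ ℕ) →₀ M := Finsupp.comapDomain σ F hσinj.injOn with hHdef
          set G : (ℕ →₀ ℕ) →₀ M := F.filter (fun μ => μ r = 0) with hGdef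
          have hσr : ∀ ν : ℕ →₀ ℕ, (σ ν) r = ν r + 1 := by
            intro ν; simp [hσ, Finsupp.add_apply, Finsupp.single_apply]
          have hσj : ∀ (ν : ℕ →₀ ℕ) (j : ℕ), j ≠ r → (σ ν) j = ν j := by
            intro ν j hj; simp [hσ, Finsupp.add_apply, Finsupp.single_apply, Ne.symm hj]
          have hFGH : F = G + Finsupp.mapDomain σ H := by
            ext μ
            by_cases h : μ r = 0
            · have h2 : Finsupp.mapDomain σ H μ = 0 := by
                refine Finsupp.mapDomain_notin_range _ _ ?_
                rintro ⟨ν, rfl⟩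
                rw [hσr ν] at h
                omega
              rw [Finsupp.add_apply, h2, add_zero, hGdef,
                  Finsupp.filter_apply_pos (fun ν => ν r = 0) F h]
            · have hμ : σ (μ - Finsupp.single r 1) = μ := by
                ext j
                by_cases hj : j = r
                · subst hj
                  rw [hσr]
                  rw [Finsupp.tsub_apply, Finsupp.single_apply, if_pos rfl]
                  omega
                · rw [hσj _ j hj, Finsupp.tsub_apply, Finsupp.single_apply,
                    if_neg (fun e => hj e.symm)]
                  omega
              have h3 : Finsupp.mapDomain σ H μ = F μ := by
                conv_lhs => rw [← hμ]
                rw [Finsupp.mapDomain_apply hσinj, hHdef, Finsupp.comapDomain_apply, hμ]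
              rw [Finsupp.add_apply, h3, hGdef,
                  Finsupp.filter_apply_neg (fun ν => ν r = 0) F h, zero_add]
          have hvalF : val y F = val y G + y r • val y H := by
            conv_lhs => rw [hFGH]
            rw [val_add, val_mapDomain_shift]
          have homG : Hom r (m + 1) G := by
            intro μ hμ
            rw [hGdef, Finsupp.support_filter, Finset.mem_filter] at hμ
            obtain ⟨hμF, hμr⟩ := hμ
            obtain ⟨h1, h2⟩ := hF μ hμF
            refine ⟨fun j hj => ?_, h2⟩
            have hj1 := h1 j hj
            have hj2 : j ≠ r := fun e => by
              subst e; exact (Finsupp.mem_support_iff.1 hj) hμr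
            omega
          have homH : Hom (r + 1) m H := by
            intro ν hν
            have hνF : σ ν ∈ F.support := by
              rw [Finsupp.mem_support_iff] at hν ⊢
              rw [hHdef, Finsupp.comapDomain_apply] at hν
              exact hν
            obtain ⟨h1, h2⟩ := hF (σ ν) hνF
            constructor
            · intro j hj
              refine h1 j ?_
              rw [Finsupp.mem_support_iff] at hj ⊢
              by_cases hjr : j = r
              · subst hjr; rw [hσr]; omega
              · rw [hσj _ j hjr]; exact hj
            · have hdeg : ((σ ν).sum fun _ e => e) = (ν.sum fun _ e => e) + 1 := by
                rw [hσ]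
                rw [Finsupp.sum_add_index' (fun _ => rfl) (fun _ _ _ => rfl),
                  Finsupp.sum_single_index rfl]
              omega
          -- decomposition of val F
          have hC : Jd y (r + 1) = Jd y r ⊔ Ideal.span {y r} := Jd_succ y r
          have hval2 : val y F ∈
              ((Jd y r) ^ (m + 2) ⊔ Ideal.span {y r} * (Jd y r ⊔ Ideal.span {y r}) ^ (m + 1))
                • (⊤ : Submodule R M) := by
            refine Submodule.smul_mono_left ?_ hval
            rw [hC]
            exact pow_sup_le _ _ (m + 1)
          rw [Submodule.sup_smul] at hval2
          obtain ⟨g, hg, b, hb, hgb⟩ := Submodule.mem_sup.1 hval2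
          have hb' : b ∈ Ideal.span {y r} •
              ((Jd y r ⊔ Ideal.span {y r}) ^ (m + 1) • (⊤ : Submodule R M)) := by
            rw [← Submodule.smul_assoc, smul_eq_mul]
            exact hb
          obtain ⟨h, hh, rfl⟩ := mem_span_singleton_smul hb'
          have h2 : g + y r • h = val y G + y r • val y H := by
            rw [← hvalF]; exact hgb
          have hkey : y r • (h - val y H) = val y G - g := by
            rw [smul_sub, sub_eq_sub_iff_add_eq_add, add_comm]
            exact h2
          have hmemkey : y r • (h - val y H) ∈ (Jd y r) ^ (m + 1) • (⊤ : Submodule R M) := by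
            rw [hkey]
            exact Submodule.sub_mem _ (val_mem y homG)
              (Submodule.smul_mono_left (Ideal.pow_le_pow_right (Nat.le_succ _)) hg)
          have hu : h - val y H ∈ (Jd y r) ^ (m + 1) • (⊤ : Submodule R M) :=
            main_aux y hQRr hregr (m + 1) (Nat.succ_le_succ (Nat.zero_le m)) _ hmemkey
          have hvalH : val y H ∈ (Jd y (r + 1)) ^ (m + 1) • (⊤ : Submodule R M) := by
            have heq : val y H = h - (h - val y H) := (sub_sub_cancel h (val y H)).symm
            rw [heq]
            refine Submodule.sub_mem _ ?_ ?_
            · rw [hC]; exact hh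
            · refine Submodule.smul_mono_left ?_ hu
              rw [hC]
              exact Ideal.pow_right_mono le_sup_left _
          have hcoeffH : ∀ ν, H ν ∈ Jd y (r + 1) • (⊤ : Submodule R M) := by
            intro ν
            rcases Nat.eq_zero_or_pos m with rfl | _
            · exact qr_deg_zero y (r + 1) H homH (by simpa using hvalH) ν
            · exact ihm H homH (by simpa using hvalH) ν
          obtain ⟨U, hU, hvalU⟩ := rep y (m + 1) _ hu
          have homGU : Hom r (m + 1) (G - y r • U) := homG.sub (Hom.smul _ hU)
          have hvalGU : val y (G - y r • U) ∈ (Jd y r) ^ (m + 2) • (⊤ : Submodule R M) := by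
            have : val y (G - y r • U) = g := by
              rw [val_sub, val_smul, hvalU, hkey, sub_sub_cancel]
            rw [this]
            exact hg
          have hcoeffGU : ∀ ν, (G - y r • U) ν ∈ Jd y r • (⊤ : Submodule R M) :=
            hQRr (m + 1) _ homGU hvalGU
          have hcoeffG : ∀ ν, G ν ∈ Jd y (r + 1) • (⊤ : Submodule R M) := by
            intro ν
            have : G ν = (G - y r • U) ν + y r • U ν := by
              rw [Finsupp.sub_apply, Finsupp.smul_apply]
              abel
            rw [this]
            refine Submodule.add_mem _ ?_ ?_
            · exact Submodule.smul_mono_left (Jd_le_succ y r) (hcoeffGU ν)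
            · exact Submodule.smul_mem_smul (mem_Jd y (Nat.lt_succ_self r)) Submodule.mem_top
          have : F μ0 = G μ0 + Finsupp.mapDomain σ H μ0 := by
            conv_lhs => rw [hFGH]
            rw [Finsupp.add_apply]
          rw [this]
          refine Submodule.add_mem _ (hcoeffG μ0) ?_
          by_cases hrange : μ0 ∈ Set.range σ
          · obtain ⟨ν, rfl⟩ := hrange
            rw [Finsupp.mapDomain_apply hσinj]
            exact hcoeffH ν
          · rw [Finsupp.mapDomain_notin_range _ _ hrange]
            exact Submodule.zero_mem _

section Final

variable {k : ℕ} (x : Fin k → R)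

/-- Extension of `x` to `ℕ`. -/
noncomputable def yext : ℕ → R := fun j => if h : j < k then x ⟨j, h⟩ else 0

lemma yext_eq (j : Fin k) : yext x (j : ℕ) = x j := by
  rw [yext, dif_pos j.isLt]

lemma Jd_yext (i : Fin k) : Jd (yext x) (i : ℕ) = Ideal.span (x '' {j | j < i}) := by
  rw [Jd]
  congr 1
  ext a
  constructor
  · rintro ⟨l, hl, rfl⟩
    have hlk : l < k := lt_trans hl i.isLt
    exact ⟨⟨l, hlk⟩, Fin.lt_def.2 hl, (yext_eq x ⟨l, hlk⟩).symm⟩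
  · rintro ⟨j, hj, rfl⟩
    exact ⟨(j : ℕ), Fin.lt_def.1 hj, yext_eq x j⟩

lemma reg_yext (hreg : IsRegularSeq M x) (i : Fin k) : Reg M (yext x) (i : ℕ) := by
  intro j hj z hz
  have hjk : j < k := lt_trans hj i.isLt
  have hJd : Jd (yext x) j = Ideal.span (x '' {l | l < (⟨j, hjk⟩ : Fin k)}) :=
    Jd_yext x ⟨j, hjk⟩
  rw [hJd] at hz ⊢
  rw [show yext x j = x ⟨j, hjk⟩ from yext_eq x ⟨j, hjk⟩] at hz
  exact hreg ⟨j, hjk⟩ z hz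

theorem final (hreg : IsRegularSeq M x) :
    ∀ i : Fin k, ∀ n : ℕ, 1 ≤ n → ∀ z : M,
      x i • z ∈ (Ideal.span (x '' {j | j < i})) ^ n • (⊤ : Submodule R M) →
        z ∈ (Ideal.span (x '' {j | j < i})) ^ n • (⊤ : Submodule R M) := by
  intro i n hn z hz
  rw [← Jd_yext x i] at hz ⊢
  refine main_aux (yext x) (qr (yext x) (i : ℕ) (reg_yext x hreg i)) ?_ n hn z hz
  intro w hw
  rw [Jd_yext x i] at hw ⊢
  exact hreg i w hw

end Final
end RegSeqAux


/-- For an `M`-regular sequence `x`, each `x i` is a non-zerodivisor on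
`M/(x_1,…,x_{i-1})^n M` for all `n ≥ 1`. -/
theorem regularSeq_regular_on_pow_quotient {R : Type*} [CommRing R]
    {M : Type*} [AddCommGroup M] [Module R M] {k : ℕ} (x : Fin k → R)
    (hreg : IsRegularSeq M x) :
    ∀ i : Fin k, ∀ n : ℕ, 1 ≤ n → ∀ z : M,
      x i • z ∈ (Ideal.span (x '' {j | j < i})) ^ n • (⊤ : Submodule R M) →
        z ∈ (Ideal.span (x '' {j | j < i})) ^ n • (⊤ : Submodule R M) :=
  RegSeqAux.final x hreg
end

section
/- Let 𝒤 ⊆ R be an ideal, x ∈ R, and suppose R/𝒤 is of bounded x-torsion, i.e., there is c with (𝒤 :_R x^m) = (𝒤 :_R x^c) for all m ≥ c. Suppose moreover that locally on a covering sequence f_1,…,f_r (with (f_1,…,f_r)R = R) the ideal 𝒤R_{f_i} is generated by a non-zerodivisor x_i ∈ R_{f_i}. Then the pair (𝒤, x) is proregular: for every n there exists m ≥ n such that (𝒤^m :_R x^m) ⊆ (𝒤^n :_R x^{m-n}). -/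
/-- Let `𝒤 ⊆ R` be an ideal which is locally principal, generated by a non-zerodivisor,
on a covering sequence `f_1,…,f_r`, and let `x ∈ R` be such that `R/𝒤` is of bounded
`x`-torsion. Then the pair `(𝒤, x)` is proregular. -/
theorem cartier_pair_proregular {R : Type*} [CommRing R]
    (𝒤 : Ideal R) (x : R) {r : ℕ} (f : Fin r → R)
    (hcov : Ideal.span (Set.range f) = ⊤)
    (ξ : ∀ i : Fin r, Localization.Away (f i))
    (hreg : ∀ i : Fin r, ξ i ∈ nonZeroDivisors (Localization.Away (f i)))
    (hprin : ∀ i : Fin r,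
      Ideal.map (algebraMap R (Localization.Away (f i))) 𝒤 = Ideal.span {ξ i})
    (hbdd : ∃ c : ℕ, ∀ m : ℕ, c ≤ m →
      ∀ s : R, x ^ m * s ∈ 𝒤 ↔ x ^ c * s ∈ 𝒤) :
    ∀ n : ℕ, ∃ m : ℕ, n ≤ m ∧
      ∀ s : R, x ^ m * s ∈ 𝒤 ^ m → x ^ (m - n) * s ∈ 𝒤 ^ n := by
  classical
  obtain ⟨c, hc⟩ := hbdd
  -- helper: descending ideal membership from the localization back to R
  have back : ∀ (J : Ideal R) (i : Fin r) (a : R),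
      algebraMap R (Localization.Away (f i)) a ∈
        J.map (algebraMap R (Localization.Away (f i))) → ∃ k : ℕ, f i ^ k * a ∈ J := by
    intro J i a ha
    rw [IsLocalization.mem_map_algebraMap_iff (Submonoid.powers (f i))] at ha
    obtain ⟨⟨⟨b, hb⟩, t⟩, ht⟩ := ha
    have h1 : algebraMap R (Localization.Away (f i)) (a * (t : R)) =
        algebraMap R (Localization.Away (f i)) b := by
      rw [map_mul]; exact ht
    rw [IsLocalization.eq_iff_exists (Submonoid.powers (f i))] at h1
    obtain ⟨u, hu⟩ := h1
    obtain ⟨k1, hk1⟩ := u.2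
    obtain ⟨k2, hk2⟩ := t.2
    have hk1' : f i ^ k1 = (u : R) := hk1
    have hk2' : f i ^ k2 = (t : R) := hk2
    refine ⟨k1 + k2, ?_⟩
    have h2 : f i ^ k1 * (a * f i ^ k2) = f i ^ k1 * b := by
      rw [hk1', hk2']; exact hu
    have hmem : f i ^ k1 * b ∈ J := J.mul_mem_left _ hb
    rw [← h2] at hmem
    have h3 : f i ^ (k1 + k2) * a = f i ^ k1 * (a * f i ^ k2) := by
      rw [pow_add]; ring
    rw [h3]; exact hmem
  -- helper: ideal membership is local on the covering
  have loc : ∀ (J : Ideal R) (a : R), (∀ i : Fin r, ∃ k : ℕ, f i ^ k * a ∈ J) → a ∈ J := by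
    intro J a h
    choose k hk using h
    set N : ℕ := Finset.univ.sup k with hN
    have hNk : ∀ i, f i ^ N * a ∈ J := by
      intro i
      have h1 : f i ^ N = f i ^ (N - k i) * f i ^ k i := by
        rw [← pow_add, Nat.sub_add_cancel (Finset.le_sup (Finset.mem_univ i))]
      rw [h1, mul_assoc]
      exact J.mul_mem_left _ (hk i)
    have htop : Ideal.span (Set.range fun i => f i ^ N) = ⊤ := by
      have h1 := Ideal.span_pow_eq_top (Set.range f) hcov N
      have h2 : (fun y : R => y ^ N) '' Set.range f = Set.range fun i => f i ^ N := by
        rw [← Set.range_comp]; rfl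
      rwa [h2] at h1
    obtain ⟨d, hd⟩ := (Submodule.mem_span_range_iff_exists_fun R).mp
      (htop ▸ Submodule.mem_top : (1 : R) ∈ Ideal.span (Set.range fun i => f i ^ N))
    have h1 : a = ∑ i, d i * (f i ^ N * a) := by
      conv_lhs => rw [← one_mul a, ← hd]
      rw [Finset.sum_mul]
      refine Finset.sum_congr rfl fun i _ => ?_
      rw [smul_eq_mul]; ring
    rw [h1]
    exact Ideal.sum_mem _ fun i _ => J.mul_mem_left _ (hNk i)
  -- key step: bounded torsion on the graded pieces `𝒤^j/𝒤^(j+1)`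
  have key : ∀ (j b : ℕ) (u : R), c ≤ b → u ∈ 𝒤 ^ j → x ^ b * u ∈ 𝒤 ^ (j + 1) →
      x ^ c * u ∈ 𝒤 ^ (j + 1) := by
    intro j b u hcb hu hxu
    apply loc
    intro i
    set L := Localization.Away (f i)
    set g : R →+* L := algebraMap R L with hg
    have hmapj : (𝒤 ^ j).map g = Ideal.span {ξ i ^ j} := by
      rw [Ideal.map_pow, hprin i, Ideal.span_singleton_pow]
    have hmapj1 : (𝒤 ^ (j + 1)).map g = Ideal.span {ξ i ^ (j + 1)} := by
      rw [Ideal.map_pow, hprin i, Ideal.span_singleton_pow]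
    obtain ⟨v, hv⟩ := Ideal.mem_span_singleton'.mp (hmapj ▸ Ideal.mem_map_of_mem g hu)
    obtain ⟨w, hw⟩ := Ideal.mem_span_singleton'.mp (hmapj1 ▸ Ideal.mem_map_of_mem g hxu)
    -- cancel `ξ i ^ j` using that `ξ i` is a non-zerodivisor
    have hcan : g x ^ b * v = w * ξ i := by
      have hz : (g x ^ b * v) * ξ i ^ j = (w * ξ i) * ξ i ^ j := by
        have h1 : g (x ^ b * u) = g x ^ b * (v * ξ i ^ j) := by rw [map_mul, map_pow, hv]
        rw [← hw] at h1
        calc (g x ^ b * v) * ξ i ^ j = g x ^ b * (v * ξ i ^ j) := by ring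
          _ = w * ξ i ^ (j + 1) := h1.symm
          _ = (w * ξ i) * ξ i ^ j := by rw [pow_succ]; ring
      exact (mul_cancel_right_mem_nonZeroDivisors (pow_mem (hreg i) j)).mp hz
    have hxbv : g x ^ b * v ∈ 𝒤.map g := by
      rw [hprin i, hcan]; exact Ideal.mem_span_singleton'.mpr ⟨w, rfl⟩
    -- clear denominators of `v`
    obtain ⟨⟨p, t⟩, hp⟩ := IsLocalization.surj (Submonoid.powers (f i)) v
    obtain ⟨k2, hk2⟩ := t.2
    have hk2' : f i ^ k2 = (t : R) := hk2
    have hp' : v * g ((t : R)) = g p := hp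
    have hgp : g (x ^ b * p) ∈ 𝒤.map g := by
      have h1 : g (x ^ b * p) = (g x ^ b * v) * g ((t : R)) := by
        rw [map_mul, map_pow, mul_assoc, hp']
      rw [h1]
      exact Ideal.mul_mem_right _ _ hxbv
    obtain ⟨k1, hk1⟩ := back 𝒤 i _ hgp
    -- apply bounded `x`-torsion of `R/𝒤`
    have hbt : x ^ c * (f i ^ k1 * p) ∈ 𝒤 := by
      have h1 : x ^ b * (f i ^ k1 * p) ∈ 𝒤 := by
        have h2 : x ^ b * (f i ^ k1 * p) = f i ^ k1 * (x ^ b * p) := by ring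
        rw [h2]; exact hk1
      exact (hc b hcb _).mp h1
    -- transport back up to the localization
    have hvc : g x ^ c * v * g ((t : R)) * g (f i ^ k1) ∈ 𝒤.map g := by
      have e1 : g x ^ c * v * g ((t : R)) * g (f i ^ k1) =
          g (x ^ c) * g (f i ^ k1) * (v * g ((t : R))) := by
        simp only [map_pow]; ring
      rw [e1, hp', ← map_mul, ← map_mul]
      have e2 : x ^ c * f i ^ k1 * p = x ^ c * (f i ^ k1 * p) := by ring
      rw [e2]
      exact Ideal.mem_map_of_mem g hbt
    have hfinal : g (f i ^ (k2 + k1) * (x ^ c * u)) ∈ (𝒤 ^ (j + 1)).map g := by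
      rw [hmapj1]
      obtain ⟨q, hq⟩ := Ideal.mem_span_singleton'.mp ((hprin i) ▸ hvc)
      refine Ideal.mem_span_singleton'.mpr ⟨q, ?_⟩
      have h1 : g (f i ^ (k2 + k1) * (x ^ c * u)) =
          (g x ^ c * v * g ((t : R)) * g (f i ^ k1)) * ξ i ^ j := by
        simp only [map_mul, map_pow]
        rw [← hv, ← hk2', map_pow, pow_add]
        ring
      rw [h1, ← hq, pow_succ]
      ring
    obtain ⟨k3, hk3⟩ := back (𝒤 ^ (j + 1)) i _ hfinal
    refine ⟨k3 + (k2 + k1), ?_⟩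
    rw [pow_add (f i), mul_assoc]
    exact hk3
  -- the main induction
  intro n
  refine ⟨n + n * c, Nat.le_add_right _ _, ?_⟩
  intro s hs
  have P : ∀ j, j ≤ n → x ^ (j * c) * s ∈ 𝒤 ^ j := by
    intro j
    induction j with
    | zero => intro _; simp [Ideal.one_eq_top]
    | succ j ih =>
      intro hj
      have hu := ih (Nat.le_of_succ_le hj)
      have hb1 : j * c + c ≤ n * c := by
        calc j * c + c = (j + 1) * c := by ring
          _ ≤ n * c := Nat.mul_le_mul_right c hj
      have hx1 : x ^ (n + n * c - j * c) * (x ^ (j * c) * s) ∈ 𝒤 ^ (j + 1) := by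
        have h1 : x ^ (n + n * c - j * c) * (x ^ (j * c) * s) = x ^ (n + n * c) * s := by
          rw [← mul_assoc, ← pow_add, Nat.sub_add_cancel (by omega)]
        rw [h1]
        exact Ideal.pow_le_pow_right (by omega) hs
      have h2 := key j _ _ (by omega) hu hx1
      have h3 : x ^ c * (x ^ (j * c) * s) = x ^ ((j + 1) * c) * s := by
        rw [← mul_assoc, ← pow_add, add_comm, Nat.succ_mul]
      rwa [h3] at h2
  have hfin := P n le_rfl
  have h4 : n + n * c - n = n * c := by omega
  rwa [h4]
end

section
/- Let x, y ∈ R with x a non-zerodivisor on R, and suppose R/xR is of bounded y-torsion. Then for every n ≥ 1 there exists m ≥ n such that (x^m R :_R y^m) ⊆ (x^n R :_R y^{m-n}), i.e., the pair (x, y) is a proregular sequence. -/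
/-- If `x` is a non-zerodivisor on `R` and `R/xR` is of bounded `y`-torsion, then the
pair `(x, y)` is a proregular sequence: for every `n ≥ 1` there is `m ≥ n` with
`(x^m R :_R y^m) ⊆ (x^n R :_R y^{m-n})`. -/
theorem pair_proregular_of_regular_boundedTorsion {R : Type*} [CommRing R]
    (x y : R) (hx : x ∈ nonZeroDivisors R)
    (hbdd : ∃ c : ℕ, ∀ m : ℕ, c ≤ m → ∀ s : R, y ^ m * s ∈ Ideal.span {x} ↔
      y ^ c * s ∈ Ideal.span {x}) :
    ∀ n : ℕ, 1 ≤ n → ∃ m : ℕ, n ≤ m ∧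
      ∀ s : R, y ^ m * s ∈ Ideal.span {x ^ m} → y ^ (m - n) * s ∈ Ideal.span {x ^ n} := by
  obtain ⟨c₀, hc₀⟩ := hbdd
  -- replace the bound by c = c₀ + 1 ≥ 1, with a one-directional divisibility form
  set c : ℕ := c₀ + 1 with hc_def
  have hc1 : 1 ≤ c := Nat.le_add_left 1 c₀
  have hc : ∀ m : ℕ, c ≤ m → ∀ s : R, x ∣ y ^ m * s → x ∣ y ^ c * s := by
    intro m hm s h
    have h1 : y ^ m * s ∈ Ideal.span {x} := Ideal.mem_span_singleton.mpr h
    have h2 : y ^ c₀ * s ∈ Ideal.span {x} := (hc₀ m (by omega) s).mp h1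
    have h3 : x ∣ y ^ c₀ * s := Ideal.mem_span_singleton.mp h2
    obtain ⟨t, ht⟩ := h3
    exact ⟨y * t, by rw [hc_def, pow_succ, mul_comm (y ^ c₀) y, mul_assoc, ht, mul_left_comm]⟩
  -- cancellation by x
  have hcancel : ∀ a b : R, x * a = x * b → a = b := by
    intro a b hab
    exact (mul_cancel_left_mem_nonZeroDivisors hx).mp hab
  -- Lemma A: bounded torsion mod x^n
  have lemA : ∀ n : ℕ, ∀ m : ℕ, n * c ≤ m → ∀ s : R,
      x ^ n ∣ y ^ m * s → x ^ n ∣ y ^ (n * c) * s := by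
    intro n
    induction n with
    | zero => intro m _ s _; simp
    | succ n ih =>
      intro m hm s h
      have hexp : (n + 1) * c = n * c + c := by ring
      obtain ⟨t, ht⟩ := h
      have hxd : x ∣ y ^ m * s := by
        refine dvd_trans ?_ ⟨t, ht⟩
        exact dvd_pow_self x (by omega)
      obtain ⟨s₁, hs₁⟩ := hc m (by omega) s hxd
      -- y^c * s = x * s₁ ; cancel x in y^(m-c)*x*s₁ = x^(n+1)*t
      have key : y ^ (m - c) * s₁ = x ^ n * t := by
        apply hcancel
        have e1 : x * (y ^ (m - c) * s₁) = y ^ (m - c) * (y ^ c * s) := by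
          rw [hs₁]; ring
        rw [e1, ← mul_assoc, ← pow_add]
        have : m - c + c = m := by omega
        rw [this, ht, pow_succ]
        ring
      have hdvd : x ^ n ∣ y ^ (m - c) * s₁ := ⟨t, key⟩
      have ihres : x ^ n ∣ y ^ (n * c) * s₁ := ih (m - c) (by omega) s₁ hdvd
      obtain ⟨u, hu⟩ := ihres
      refine ⟨u, ?_⟩
      have e2 : y ^ ((n + 1) * c) * s = y ^ (n * c) * (y ^ c * s) := by
        rw [← mul_assoc, ← pow_add]; ring_nf
      rw [e2, hs₁, pow_succ]
      calc y ^ (n * c) * (x * s₁) = x * (y ^ (n * c) * s₁) := by ring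
        _ = x * (x ^ n * u) := by rw [hu]
        _ = x ^ n * x * u := by ring
  -- Lemma B
  have lemB : ∀ n : ℕ, 1 ≤ n → ∀ m : ℕ, n * c + 1 ≤ m → ∀ s : R,
      x ^ m ∣ y ^ m * s → x ^ n ∣ y ^ (m - 1) * s := by
    intro n hn
    induction n with
    | zero => omega
    | succ n ih =>
      intro m hm s h
      have hexp : (n + 1) * c = n * c + c := by ring
      rcases Nat.eq_zero_or_pos n with hn0 | hn0
      · -- base case n + 1 = 1
        subst hn0
        have hxd : x ∣ y ^ m * s := by
          refine dvd_trans ?_ h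
          exact dvd_pow_self x (by omega)
        obtain ⟨s₁, hs₁⟩ := hc m (by omega) s hxd
        refine ⟨y ^ (m - 1 - c) * s₁, ?_⟩
        have e : y ^ (m - 1) * s = y ^ (m - 1 - c) * (y ^ c * s) := by
          rw [← mul_assoc, ← pow_add]
          congr 2
          omega
        rw [pow_one, e, hs₁]; ring
      · -- inductive step
        obtain ⟨t, ht⟩ := h
        have hxd : x ∣ y ^ m * s := by
          refine dvd_trans ?_ ⟨t, ht⟩
          exact dvd_pow_self x (by omega)
        obtain ⟨s₁, hs₁⟩ := hc m (by omega) s hxd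
        have key : y ^ (m - c) * s₁ = x ^ (m - 1) * t := by
          apply hcancel
          have e1 : x * (y ^ (m - c) * s₁) = y ^ (m - c) * (y ^ c * s) := by
            rw [hs₁]; ring
          rw [e1, ← mul_assoc, ← pow_add]
          have h2 : m - c + c = m := by omega
          rw [h2, ht]
          have h3 : m = (m - 1) + 1 := by omega
          calc x ^ m * t = x ^ ((m-1)+1) * t := by rw [← h3]
            _ = x * (x ^ (m - 1) * t) := by rw [pow_succ]; ring
        have hdvd : x ^ (m - c) ∣ y ^ (m - c) * s₁ := by
          rw [key]
          exact Dvd.dvd.mul_right (pow_dvd_pow x (by omega)) t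
        have ihres : x ^ n ∣ y ^ (m - c - 1) * s₁ :=
          ih hn0 (m - c) (by omega) s₁ hdvd
        obtain ⟨u, hu⟩ := ihres
        refine ⟨u, ?_⟩
        have e : y ^ (m - 1) * s = y ^ (m - 1 - c) * (y ^ c * s) := by
          rw [← mul_assoc, ← pow_add]
          congr 2
          omega
        have e2 : m - 1 - c = m - c - 1 := by omega
        rw [e, hs₁, pow_succ]
        calc y ^ (m - 1 - c) * (x * s₁) = x * (y ^ (m - 1 - c) * s₁) := by ring
          _ = x * (y ^ (m - c - 1) * s₁) := by rw [e2]
          _ = x * (x ^ n * u) := by rw [hu]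
          _ = x ^ n * x * u := by ring
  -- conclusion
  intro n hn
  refine ⟨n * c + n + 1, by omega, ?_⟩
  intro s hs
  set m : ℕ := n * c + n + 1 with hm_def
  have h0 : x ^ m ∣ y ^ m * s := Ideal.mem_span_singleton.mp hs
  have hB : x ^ n ∣ y ^ (m - 1) * s := lemB n hn m (by omega) s h0
  have hA : x ^ n ∣ y ^ (n * c) * s := lemA n (m - 1) (by omega) s hB
  rw [Ideal.mem_span_singleton]
  have e : y ^ (m - n) * s = y ^ (m - n - n * c) * (y ^ (n * c) * s) := by
    rw [← mul_assoc, ← pow_add]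
    congr 2
    omega
  rw [e]
  exact Dvd.dvd.mul_left hA _
end
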